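/- arXiv:2602.02877 — 5 statements merged into one kernel-verified Lean document; each statement's English description precedes it below -/
import Mathlib

section
/- Fix ν₀ < ν₁ and let Δ = ν₁ − ν₀. Define H(ν) = φ(ν−ν₀) + φ(ν−ν₁) where φ(u) = e^{−u} + u − 1. Then H is strictly convex, its unique minimizer lies in (ν₀, ν₁), and if Δ ≤ 1 then inf_{ν∈ℝ} H(ν) ≥ (e^{−1}/4)·Δ². -/
private lemma exp_tangent (s t : ℝ) : Real.exp s * (1 + (t - s)) ≤ Real.exp t := by
  have h := Real.add_one_le_exp (t - s)
  have h2 := mul_le_mul_of_nonneg_left h (le_of_lt (Real.exp_pos s))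
  calc Real.exp s * (1 + (t - s)) = Real.exp s * (t - s + 1) := by ring
    _ ≤ Real.exp s * Real.exp (t - s) := h2
    _ = Real.exp t := by rw [← Real.exp_add]; ring_nf

private lemma quad_bound (u : ℝ) (hu : u ≤ 2) : u ^ 2 / 4 ≤ Real.exp (-u) + u - 1 := by
  have h := Real.add_one_le_exp (-u / 2)
  have hpos : (0:ℝ) ≤ 1 - u / 2 := by linarith
  have hsq : (1 - u / 2) ^ 2 ≤ Real.exp (-u / 2) ^ 2 := by
    have hle : 1 - u / 2 ≤ Real.exp (-u / 2) := by linarith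
    exact pow_le_pow_left₀ hpos hle 2
  have heq : Real.exp (-u / 2) ^ 2 = Real.exp (-u) := by
    rw [sq, ← Real.exp_add]; ring_nf
  nlinarith [hsq]

private lemma phi_nonneg (u : ℝ) : 0 ≤ Real.exp (-u) + u - 1 := by
  have := Real.add_one_le_exp (-u); linarith

theorem two_point_inf_loss_bound
    (ν₀ ν₁ : ℝ) (h01 : ν₀ < ν₁) (Δ : ℝ) (hΔ : Δ = ν₁ - ν₀)
    (φ : ℝ → ℝ) (hφ : ∀ u, φ u = Real.exp (-u) + u - 1)
    (H : ℝ → ℝ) (hH : ∀ ν, H ν = φ (ν - ν₀) + φ (ν - ν₁)) :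
    StrictConvexOn ℝ Set.univ H ∧
    (∃! ν : ℝ, ∀ x, H ν ≤ H x) ∧
    (∀ ν : ℝ, (∀ x, H ν ≤ H x) → ν ∈ Set.Ioo ν₀ ν₁) ∧
    (Δ ≤ 1 → ∀ ν : ℝ, (Real.exp (-1) / 4) * Δ ^ 2 ≤ H ν) := by
  have hΔpos : 0 < Δ := by rw [hΔ]; linarith
  -- strict convexity
  have hsc : StrictConvexOn ℝ Set.univ H := by
    refine ⟨convex_univ, ?_⟩
    intro x _ y _ hxy a b ha hb hab
    have h0 : -(x - ν₀) ≠ -(y - ν₀) := by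
      intro h; apply hxy; have := neg_injective h; linarith
    have h1 := strictConvexOn_exp.2 (Set.mem_univ (-(x - ν₀))) (Set.mem_univ (-(y - ν₀))) h0 ha hb hab
    have h2 := strictConvexOn_exp.convexOn.2 (Set.mem_univ (-(x - ν₁))) (Set.mem_univ (-(y - ν₁))) ha.le hb.le hab
    simp only [smul_eq_mul] at h1 h2 ⊢
    have hν₀ : a * ν₀ + b * ν₀ = ν₀ := by rw [← add_mul, hab, one_mul]
    have hν₁ : a * ν₁ + b * ν₁ = ν₁ := by rw [← add_mul, hab, one_mul]
    have e1 : a * -(x - ν₀) + b * -(y - ν₀) = -(a * x + b * y - ν₀) := by linarith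
    have e2 : a * -(x - ν₁) + b * -(y - ν₁) = -(a * x + b * y - ν₁) := by linarith
    rw [e1] at h1; rw [e2] at h2
    simp only [hH, hφ]
    nlinarith [h1, h2]
  have hexpΔ : 1 < Real.exp Δ := by nlinarith [Real.add_one_le_exp Δ]
  -- the minimizer
  set q : ℝ := (1 + Real.exp Δ) / 2 with hq
  have hq1 : 1 < q := by rw [hq]; linarith
  have hqpos : (0:ℝ) < q := by linarith
  set m : ℝ := ν₀ + Real.log q with hm
  have hc0 : Real.exp (-(m - ν₀)) = 1 / q := by
    rw [hm]; simp [Real.exp_neg, Real.exp_log hqpos]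
  have hc1 : Real.exp (-(m - ν₁)) = Real.exp Δ / q := by
    have : -(m - ν₁) = Δ + (- Real.log q) := by rw [hm, hΔ]; ring
    rw [this, Real.exp_add, Real.exp_neg, Real.exp_log hqpos]; ring
  have hsum : Real.exp (-(m - ν₀)) + Real.exp (-(m - ν₁)) = 2 := by
    rw [hc0, hc1]; field_simp [hq]; ring
  have hmin : ∀ x, H m ≤ H x := by
    intro x
    have t0 := exp_tangent (-(m - ν₀)) (-(x - ν₀))
    have t1 := exp_tangent (-(m - ν₁)) (-(x - ν₁))
    have key : 2 * (1 + (m - x)) ≤ Real.exp (-(x - ν₀)) + Real.exp (-(x - ν₁)) := by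
      calc 2 * (1 + (m - x))
          = Real.exp (-(m - ν₀)) * (1 + (-(x - ν₀) - -(m - ν₀)))
            + Real.exp (-(m - ν₁)) * (1 + (-(x - ν₁) - -(m - ν₁))) := by rw [← hsum]; ring
        _ ≤ _ := add_le_add t0 t1
    simp only [hH, hφ]
    linarith [key, hsum]
  have hmIoo : m ∈ Set.Ioo ν₀ ν₁ := by
    constructor
    · rw [hm]; have : 0 < Real.log q := Real.log_pos hq1; linarith
    · have hlt : Real.log q < Δ := by
        have : q < Real.exp Δ := by rw [hq]; linarith
        calc Real.log q < Real.log (Real.exp Δ) := Real.log_lt_log hqpos this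
          _ = Δ := Real.log_exp Δ
      rw [hm, hΔ] at *; linarith
  have huniq : ∀ ν : ℝ, (∀ x, H ν ≤ H x) → ν = m := by
    intro ν hν
    by_contra hne
    have heq : H ν = H m := le_antisymm (hν m) (hmin ν)
    have hmid := hsc.2 (Set.mem_univ ν) (Set.mem_univ m) hne
      (by norm_num : (0:ℝ) < 1/2) (by norm_num : (0:ℝ) < 1/2) (by norm_num)
    simp only [smul_eq_mul] at hmid
    have := hν ((1/2) * ν + (1/2) * m)
    rw [heq] at hmid
    linarith [hν ((1/2) * ν + (1/2) * m)]
  refine ⟨hsc, ⟨m, hmin, huniq⟩, fun ν hν => huniq ν hν ▸ hmIoo, ?_⟩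
  -- quantitative bound
  intro hΔ1 ν
  have hb : ν - ν₁ = (ν - ν₀) - Δ := by rw [hΔ]; ring
  have he1 : Real.exp (-1) ≤ 1/2 := by
    have h2 : (2:ℝ) ≤ Real.exp 1 := by nlinarith [Real.add_one_le_exp 1]
    have hmul : Real.exp (-1) * Real.exp 1 = 1 := by rw [← Real.exp_add]; norm_num
    nlinarith [Real.exp_pos (-1)]
  simp only [hH, hφ]
  rw [hb]
  set a : ℝ := ν - ν₀ with ha
  rcases le_or_gt a 1 with hA | hA
  · have q1 := quad_bound a (by linarith)
    have q2 := quad_bound (a - Δ) (by linarith)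
    nlinarith [sq_nonneg (a - Δ/2), sq_nonneg Δ, Real.exp_pos (-1)]
  · -- a > 1 : first term ≥ exp (-1)
    have t := exp_tangent (-1) (-a)
    have h2 := phi_nonneg (a - Δ)
    have hφa : Real.exp (-1) ≤ Real.exp (-a) + a - 1 := by
      have he0 : 0 < Real.exp (-1) := Real.exp_pos _
      nlinarith [t]
    have hΔsq : Δ ^ 2 ≤ 1 := by nlinarith
    nlinarith [Real.exp_pos (-1), mul_le_mul_of_nonneg_left hΔsq (Real.exp_pos (-1)).le]
end

section
/- Let φ(ν) = e^{−ν}, and define the Bregman divergence D_φ(a,b) = e^{−a} − e^{−b} + e^{−b}(a − b). Given ν_{t−1} ∈ ℝ, α > 0, s ∈ ℝ, the minimizer ν_t of the function ν ↦ e^{s−ν} + ν + (1/α)·D_φ(ν, ν_{t−1}) satisfies e^{ν_t} = e^{ν_{t−1}}/(1 + α e^{ν_{t−1}}) + (α e^{ν_{t−1}}/(1 + α e^{ν_{t−1}}))·e^{s}. -/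
theorem spmd_closed_form_update
    (νprev α s : ℝ) (hα : 0 < α)
    (D : ℝ → ℝ → ℝ)
    (hD : ∀ a b, D a b = Real.exp (-a) - Real.exp (-b) + Real.exp (-b) * (a - b))
    (νt : ℝ)
    (hmin : ∀ ν : ℝ,
      Real.exp (s - νt) + νt + (1 / α) * D νt νprev ≤
        Real.exp (s - ν) + ν + (1 / α) * D ν νprev) :
    Real.exp νt = Real.exp νprev / (1 + α * Real.exp νprev) +
      (α * Real.exp νprev / (1 + α * Real.exp νprev)) * Real.exp s := by
  set f : ℝ → ℝ := fun ν => Real.exp (s - ν) + ν +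
    (1 / α) * (Real.exp (-ν) - Real.exp (-νprev) + Real.exp (-νprev) * (ν - νprev)) with hf
  have hlocal : IsLocalMin f νt := by
    apply Filter.Eventually.of_forall
    intro ν
    have := hmin ν
    rw [hD, hD] at this
    simpa [hf] using this
  have hderiv : HasDerivAt f
      (Real.exp (s - νt) * (-1) + 1 +
        (1 / α) * (Real.exp (-νt) * (-1) + Real.exp (-νprev) * 1)) νt := by
    have h1 : HasDerivAt (fun ν : ℝ => Real.exp (s - ν)) (Real.exp (s - νt) * (-1)) νt := by
      have : HasDerivAt (fun ν : ℝ => s - ν) (-1) νt := by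
        simpa using (hasDerivAt_const νt s).fun_sub (hasDerivAt_id' νt)
      simpa using this.exp
    have h2 : HasDerivAt (fun ν : ℝ =>
        Real.exp (-ν) - Real.exp (-νprev) + Real.exp (-νprev) * (ν - νprev))
        (Real.exp (-νt) * (-1) + Real.exp (-νprev) * 1) νt := by
      have ha : HasDerivAt (fun ν : ℝ => Real.exp (-ν)) (Real.exp (-νt) * (-1)) νt := by
        have : HasDerivAt (fun ν : ℝ => -ν) (-1) νt := (hasDerivAt_id νt).neg
        simpa using this.exp
      have hb : HasDerivAt (fun ν : ℝ => Real.exp (-νprev) * (ν - νprev))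
          (Real.exp (-νprev) * 1) νt := by
        have : HasDerivAt (fun ν : ℝ => ν - νprev) 1 νt := by
          simpa using (hasDerivAt_id' νt).fun_sub (hasDerivAt_const νt νprev)
        exact this.const_mul _
      simpa using (ha.fun_sub (hasDerivAt_const νt (Real.exp (-νprev)))).fun_add hb
    exact (h1.add (hasDerivAt_id νt)).add (h2.const_mul (1 / α))
  have hzero : Real.exp (s - νt) * (-1) + 1 +
      (1 / α) * (Real.exp (-νt) * (-1) + Real.exp (-νprev) * 1) = 0 :=
    hlocal.hasDerivAt_eq_zero hderiv
  -- turn into algebraic equation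
  have hne : Real.exp νt ≠ 0 := Real.exp_ne_zero _
  have h1 : Real.exp (s - νt) = Real.exp s / Real.exp νt := by
    rw [Real.exp_sub]
  have h2 : Real.exp (-νt) = 1 / Real.exp νt := by
    rw [Real.exp_neg]; ring
  have h3 : Real.exp (-νprev) = 1 / Real.exp νprev := by
    rw [Real.exp_neg]; ring
  rw [h1, h2, h3] at hzero
  have hpne : Real.exp νprev ≠ 0 := Real.exp_ne_zero _
  have hαne : α ≠ 0 := ne_of_gt hα
  have hdpos : (0:ℝ) < 1 + α * Real.exp νprev := by positivity
  have hdne : (1:ℝ) + α * Real.exp νprev ≠ 0 := ne_of_gt hdpos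
  field_simp at hzero ⊢
  nlinarith [hzero, Real.exp_pos νt, Real.exp_pos νprev, Real.exp_pos s]
end

section
/- Let z be a nonnegative random variable with 0 < E[z] < ∞ and E[z²]/(E[z])² ≤ κ. Let m = E[z] and z̄_T = (1/T)∑_{i=1}^T z_i for i.i.d. copies z_i. Then P(z̄_T ≤ m/2) ≤ exp(−T/(8κ)). -/
open MeasureTheory ProbabilityTheory

lemma exp_neg_le_quadratic {x : ℝ} (hx : 0 ≤ x) :
    Real.exp (-x) ≤ 1 - x + x ^ 2 / 2 := by
  set f : ℝ → ℝ := fun y => 1 - y + y ^ 2 / 2 - Real.exp (-y) with hf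
  have hderiv : ∀ y : ℝ, HasDerivAt f (-1 + y + Real.exp (-y)) y := by
    intro y
    have h1 : HasDerivAt (fun y : ℝ => Real.exp (-y)) (-Real.exp (-y)) y := by
      exact ((Real.hasDerivAt_exp (-y)).comp y (hasDerivAt_neg y)).congr_deriv (by ring)
    have h2 : HasDerivAt (fun y : ℝ => 1 - y + y ^ 2 / 2) (-1 + y) y := by
      have := ((hasDerivAt_id y).const_sub 1).add
        (((hasDerivAt_pow 2 y).div_const 2))
      exact this.congr_deriv (by norm_num)
    exact (h2.sub h1).congr_deriv (by ring)
  have hmono : MonotoneOn f (Set.Ici (0:ℝ)) := by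
    refine monotoneOn_of_deriv_nonneg (convex_Ici 0)
      (Continuous.continuousOn (by fun_prop)) ?_ ?_
    · intro y hy
      exact (hderiv y).differentiableAt.differentiableWithinAt
    · intro y hy
      rw [(hderiv y).deriv]
      have : 1 - y ≤ Real.exp (-y) := by
        have := Real.add_one_le_exp (-y); linarith
      linarith
  have h0 : f 0 = 0 := by simp [hf]
  have := hmono (Set.self_mem_Ici) (Set.mem_Ici.mpr hx) hx
  rw [h0] at this
  simpa [hf] using this

theorem chernoff_left_tail
    {Ω : Type*} [MeasurableSpace Ω] (P : Measure Ω) [IsProbabilityMeasure P]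
    (z : ℕ → Ω → ℝ)
    (hmeas : ∀ i, Measurable (z i))
    (hindep : iIndepFun z P)
    (hident : ∀ i, Measure.map (z i) P = Measure.map (z 0) P)
    (hnonneg : ∀ i, 0 ≤ᵐ[P] z i)
    (hint : Integrable (z 0) P)
    (hint2 : Integrable (fun ω => (z 0 ω) ^ 2) P)
    (m : ℝ) (hm : m = ∫ ω, z 0 ω ∂P) (hm_pos : 0 < m)
    (κ : ℝ) (hκ : (∫ ω, (z 0 ω) ^ 2 ∂P) ≤ κ * m ^ 2)
    (T : ℕ) (hT : 0 < T) :
    P {ω | (1 / (T : ℝ)) * ∑ i ∈ Finset.range T, z i ω ≤ m / 2} ≤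
      ENNReal.ofReal (Real.exp (-(T : ℝ) / (8 * κ))) := by
  set μ2 : ℝ := ∫ ω, (z 0 ω) ^ 2 ∂P with hμ2
  -- m² ≤ μ2 via variance nonneg
  have hmem : MemLp (z 0) 2 P :=
    (memLp_two_iff_integrable_sq (hmeas 0).aestronglyMeasurable).mpr hint2
  have hm2le : m ^ 2 ≤ μ2 := by
    have hv := variance_nonneg (z 0) P
    rw [variance_eq_sub hmem] at hv
    have : (P[(z 0) ^ 2] : ℝ) = μ2 := by
      simp only [hμ2]; congr 1
    rw [this, ← hm] at hv
    linarith
  have hμ2pos : 0 < μ2 := lt_of_lt_of_le (by positivity) hm2le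
  have hκpos : 0 < κ := by nlinarith
  set t : ℝ := -(m / (2 * μ2)) with ht_def
  have ht_neg : t ≤ 0 := by
    have : 0 < m / (2 * μ2) := by positivity
    simp [ht_def]; linarith
  -- integrability of exp (t * z i)
  have hint_exp : ∀ i, Integrable (fun ω => Real.exp (t * z i ω)) P := by
    intro i
    refine Integrable.mono' (integrable_const 1)
      (((hmeas i).const_mul t).exp.aestronglyMeasurable) ?_
    filter_upwards [hnonneg i] with ω hω
    rw [Real.norm_eq_abs, abs_of_pos (Real.exp_pos _), Real.exp_le_one_iff]
    exact mul_nonpos_of_nonpos_of_nonneg ht_neg hω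
  -- identical mgf
  have hkey : ∀ j : ℕ, (∫ x, Real.exp (t * x) ∂(Measure.map (z j) P)) =
      ∫ ω, Real.exp (t * z j ω) ∂P := fun j =>
    integral_map (hmeas j).aemeasurable
      (Continuous.aestronglyMeasurable (by fun_prop))
  have hmgf_eq : ∀ i, mgf (z i) P t = mgf (z 0) P t := by
    intro i
    have h1 : mgf (z i) P t = ∫ x, Real.exp (t * x) ∂(Measure.map (z i) P) := (hkey i).symm
    rw [h1, hident i, hkey 0]
    rfl
  -- mgf bound
  have hmgf_le : mgf (z 0) P t ≤ Real.exp (t * m + t ^ 2 * μ2 / 2) := by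
    have hle : mgf (z 0) P t ≤ 1 + t * m + t ^ 2 * μ2 / 2 := by
      unfold mgf
      have hint_rhs : Integrable (fun ω => 1 + t * z 0 ω + t ^ 2 * (z 0 ω) ^ 2 / 2) P := by
        refine (((integrable_const 1).add (hint.const_mul t)).add ?_)
        exact (hint2.const_mul (t ^ 2)).div_const 2
      have hptle : (fun ω => Real.exp (t * z 0 ω)) ≤ᵐ[P]
          fun ω => 1 + t * z 0 ω + t ^ 2 * (z 0 ω) ^ 2 / 2 := by
        filter_upwards [hnonneg 0] with ω hω
        have hx : 0 ≤ -t * z 0 ω := mul_nonneg (neg_nonneg.mpr ht_neg) hω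
        have := exp_neg_le_quadratic hx
        have hrw : -(-t * z 0 ω) = t * z 0 ω := by ring
        rw [hrw] at this
        nlinarith [this]
      calc P[fun ω => Real.exp (t * z 0 ω)]
          ≤ ∫ ω, (1 + t * z 0 ω + t ^ 2 * (z 0 ω) ^ 2 / 2) ∂P :=
            integral_mono_ae (f := fun ω => Real.exp (t * z 0 ω))
              (g := fun ω => 1 + t * z 0 ω + t ^ 2 * (z 0 ω) ^ 2 / 2)
              (hint_exp 0) hint_rhs hptle
        _ = 1 + t * m + t ^ 2 * μ2 / 2 := by
            have i1 : ∫ ω, (1 + t * z 0 ω + t ^ 2 * (z 0 ω) ^ 2 / 2) ∂P =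
                (∫ ω, (1 + t * z 0 ω) ∂P) + ∫ ω, (t ^ 2 * (z 0 ω) ^ 2 / 2) ∂P :=
              integral_add ((integrable_const 1).add (hint.const_mul t))
                ((hint2.const_mul (t ^ 2)).div_const 2)
            have i2 : ∫ ω, (1 + t * z 0 ω) ∂P = 1 + t * m := by
              rw [integral_add (integrable_const 1) (hint.const_mul t),
                integral_const, integral_const_mul, ← hm]
              simp
            have i3 : ∫ ω, (t ^ 2 * (z 0 ω) ^ 2 / 2) ∂P = t ^ 2 * μ2 / 2 := by
              rw [integral_div, integral_const_mul, ← hμ2]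
            rw [i1, i2, i3]
    refine hle.trans ?_
    have := Real.add_one_le_exp (t * m + t ^ 2 * μ2 / 2)
    linarith
  -- rewrite the set
  have hset : {ω | (1 / (T : ℝ)) * ∑ i ∈ Finset.range T, z i ω ≤ m / 2} =
      {ω | (∑ i ∈ Finset.range T, z i) ω ≤ (T : ℝ) * m / 2} := by
    ext ω
    simp only [Set.mem_setOf_eq, Finset.sum_apply]
    rw [div_mul_eq_mul_div, one_mul, div_le_div_iff₀ (by positivity : (0:ℝ) < (T:ℝ)) (by norm_num : (0:ℝ) < 2)]
    constructor
    · intro h; nlinarith [h]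
    · intro h; nlinarith [h]
  rw [hset]
  -- Chernoff bound
  have hS_int : Integrable (fun ω => Real.exp (t * (∑ i ∈ Finset.range T, z i) ω)) P :=
    hindep.integrable_exp_mul_sum hmeas (fun i _ => hint_exp i)
  have hcher := measure_le_le_exp_mul_mgf (μ := P) (X := ∑ i ∈ Finset.range T, z i)
    ((T : ℝ) * m / 2) ht_neg hS_int
  have hmgf_sum : mgf (∑ i ∈ Finset.range T, z i) P t = (mgf (z 0) P t) ^ T := by
    rw [hindep.mgf_sum hmeas (Finset.range T)]
    rw [Finset.prod_congr rfl (fun i _ => hmgf_eq i), Finset.prod_const, Finset.card_range]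
  rw [hmgf_sum] at hcher
  have hstep : (P {ω | (∑ i ∈ Finset.range T, z i) ω ≤ (T : ℝ) * m / 2}).toReal ≤
      Real.exp (-(T : ℝ) / (8 * κ)) := by
    refine hcher.trans ?_
    have h1 : (mgf (z 0) P t) ^ T ≤ Real.exp (t * m + t ^ 2 * μ2 / 2) ^ T :=
      pow_le_pow_left₀ mgf_nonneg hmgf_le T
    calc Real.exp (-t * ((T : ℝ) * m / 2)) * (mgf (z 0) P t) ^ T
        ≤ Real.exp (-t * ((T : ℝ) * m / 2)) * Real.exp (t * m + t ^ 2 * μ2 / 2) ^ T := by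
          exact mul_le_mul_of_nonneg_left h1 (Real.exp_pos _).le
      _ = Real.exp (-t * ((T : ℝ) * m / 2) + (T : ℝ) * (t * m + t ^ 2 * μ2 / 2)) := by
          rw [← Real.exp_nat_mul, ← Real.exp_add]
      _ ≤ Real.exp (-(T : ℝ) / (8 * κ)) := by
          apply Real.exp_le_exp.mpr
          have hexp_eq : -t * ((T : ℝ) * m / 2) + (T : ℝ) * (t * m + t ^ 2 * μ2 / 2) =
              -(T : ℝ) * (m ^ 2 / (8 * μ2)) := by
            rw [ht_def]; field_simp; ring
          rw [hexp_eq, neg_mul, neg_div, neg_le_neg_iff]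
          have hfrac : (1:ℝ) / (8 * κ) ≤ m ^ 2 / (8 * μ2) := by
            rw [div_le_div_iff₀ (by positivity) (by positivity)]
            nlinarith
          calc (T : ℝ) / (8 * κ) = (T : ℝ) * ((1:ℝ) / (8 * κ)) := by ring
            _ ≤ (T : ℝ) * (m ^ 2 / (8 * μ2)) :=
              mul_le_mul_of_nonneg_left hfrac (Nat.cast_nonneg T)
  rw [← ENNReal.ofReal_toReal (measure_ne_top P _)]
  exact ENNReal.ofReal_le_ofReal hstep
end

section
/- Let P₀, P₁ be two probability measures on a measurable space and L₀, L₁ nonnegative measurable loss functions on a decision space. Then for any measurable estimator â, max{E_{P₀}[L₀(â)], E_{P₁}[L₁(â)]} ≥ ((1 − TV(P₀, P₁))/2) · inf_a (L₀(a) + L₁(a)), where TV is the total variation distance. -/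
open MeasureTheory ENNReal

/-- Total variation distance between two measures:
`sup` over measurable sets of the absolute difference of their masses. -/
noncomputable def tvDist {Ω : Type*} [MeasurableSpace Ω]
    (P Q : Measure Ω) : ℝ :=
  ⨆ s : {s : Set Ω // MeasurableSet s}, |(P s.1).toReal - (Q s.1).toReal|

theorem le_cam_two_point
    {Ω A : Type*} [MeasurableSpace Ω] [MeasurableSpace A] [Nonempty A]
    (P₀ P₁ : Measure Ω) [IsProbabilityMeasure P₀] [IsProbabilityMeasure P₁]
    (L₀ L₁ : A → ℝ≥0∞) (hL₀ : Measurable L₀) (hL₁ : Measurable L₁)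
    (a_hat : Ω → A) (ha : Measurable a_hat) :
    ENNReal.ofReal ((1 - tvDist P₀ P₁) / 2) * (⨅ a : A, (L₀ a + L₁ a)) ≤
      max (∫⁻ ω, L₀ (a_hat ω) ∂P₀) (∫⁻ ω, L₁ (a_hat ω) ∂P₁) := by
  set M : Measure Ω := P₀ + P₁ with hM
  have hac₀ : P₀ ≪ M := Measure.absolutelyContinuous_of_le (Measure.le_add_right le_rfl)
  have hac₁ : P₁ ≪ M := Measure.absolutelyContinuous_of_le (Measure.le_add_left le_rfl)
  set f₀ := P₀.rnDeriv M with hf₀def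
  set f₁ := P₁.rnDeriv M with hf₁def
  have hf₀ : Measurable f₀ := Measure.measurable_rnDeriv _ _
  have hf₁ : Measurable f₁ := Measure.measurable_rnDeriv _ _
  have hd₀ : M.withDensity f₀ = P₀ := Measure.withDensity_rnDeriv_eq _ _ hac₀
  have hd₁ : M.withDensity f₁ = P₁ := Measure.withDensity_rnDeriv_eq _ _ hac₁
  set g : Ω → ℝ≥0∞ := fun ω => min (f₀ ω) (f₁ ω) with hgdef
  have hg : Measurable g := hf₀.min hf₁
  set s : Set Ω := {ω | f₁ ω < f₀ ω} with hsdef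
  have hs : MeasurableSet s := measurableSet_lt hf₁ hf₀
  -- ∫ g = P₁ s + P₀ sᶜ
  have hint_g : ∫⁻ ω, g ω ∂M = P₁ s + P₀ sᶜ := by
    have h1 : ∫⁻ ω in s, g ω ∂M = P₁ s := by
      rw [setLIntegral_congr_fun hs (fun ω hω => min_eq_right (le_of_lt hω))]
      rw [← hd₁, withDensity_apply _ hs]
    have h2 : ∫⁻ ω in sᶜ, g ω ∂M = P₀ sᶜ := by
      rw [setLIntegral_congr_fun hs.compl
        (fun ω hω => min_eq_left (not_lt.mp hω))]
      rw [← hd₀, withDensity_apply _ hs.compl]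
    rw [← lintegral_add_compl _ hs, h1, h2]
  -- TV lower bound via the set s
  have hbdd : BddAbove (Set.range fun t : {t : Set Ω // MeasurableSet t} =>
      |(P₀ t.1).toReal - (P₁ t.1).toReal|) := by
    refine ⟨1, ?_⟩
    rintro x ⟨t, rfl⟩
    have h0 : (P₀ t.1).toReal ≤ 1 := by
      have := prob_le_one (μ := P₀) (s := t.1)
      simpa using ENNReal.toReal_mono one_ne_top this
    have h1 : (P₁ t.1).toReal ≤ 1 := by
      have := prob_le_one (μ := P₁) (s := t.1)
      simpa using ENNReal.toReal_mono one_ne_top this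
    have h2 : 0 ≤ (P₀ t.1).toReal := ENNReal.toReal_nonneg
    have h3 : 0 ≤ (P₁ t.1).toReal := ENNReal.toReal_nonneg
    rw [abs_sub_le_iff]
    constructor <;> linarith
  have hTV : (P₀ s).toReal - (P₁ s).toReal ≤ tvDist P₀ P₁ := by
    refine le_trans (le_abs_self _) ?_
    exact le_ciSup hbdd ⟨s, hs⟩
  -- 1 - TV ≤ ∫ g
  have hkey : ENNReal.ofReal (1 - tvDist P₀ P₁) ≤ ∫⁻ ω, g ω ∂M := by
    rw [hint_g]
    have hfin₁ : P₁ s ≠ ∞ := measure_ne_top _ _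
    have hfin₀ : P₀ sᶜ ≠ ∞ := measure_ne_top _ _
    have : P₁ s + P₀ sᶜ = ENNReal.ofReal ((P₁ s).toReal + (P₀ sᶜ).toReal) := by
      rw [ENNReal.ofReal_add ENNReal.toReal_nonneg ENNReal.toReal_nonneg,
        ENNReal.ofReal_toReal hfin₁, ENNReal.ofReal_toReal hfin₀]
    rw [this]
    apply ENNReal.ofReal_le_ofReal
    have hc : (P₀ sᶜ).toReal = 1 - (P₀ s).toReal := by
      rw [measure_compl hs (measure_ne_top _ _), measure_univ,
        ENNReal.toReal_sub_of_le prob_le_one one_ne_top]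
      simp
    rw [hc]
    linarith
  set I : ℝ≥0∞ := ⨅ a : A, (L₀ a + L₁ a) with hIdef
  set X := ∫⁻ ω, L₀ (a_hat ω) ∂P₀ with hXdef
  set Y := ∫⁻ ω, L₁ (a_hat ω) ∂P₁ with hYdef
  -- X and Y as integrals against M
  have hX : X = ∫⁻ ω, L₀ (a_hat ω) * f₀ ω ∂M := by
    have h := lintegral_withDensity_eq_lintegral_mul M hf₀ (hL₀.comp ha)
    simp only [Function.comp, Pi.mul_apply] at h
    rw [hXdef, ← hd₀, h]
    exact lintegral_congr fun ω => mul_comm _ _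
  have hY : Y = ∫⁻ ω, L₁ (a_hat ω) * f₁ ω ∂M := by
    have h := lintegral_withDensity_eq_lintegral_mul M hf₁ (hL₁.comp ha)
    simp only [Function.comp, Pi.mul_apply] at h
    rw [hYdef, ← hd₁, h]
    exact lintegral_congr fun ω => mul_comm _ _
  have hchain : I * ENNReal.ofReal (1 - tvDist P₀ P₁) ≤ X + Y := by
    calc I * ENNReal.ofReal (1 - tvDist P₀ P₁)
        ≤ I * ∫⁻ ω, g ω ∂M := mul_le_mul_right hkey I
      _ = ∫⁻ ω, I * g ω ∂M := (lintegral_const_mul I hg).symm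
      _ ≤ ∫⁻ ω, (L₀ (a_hat ω) + L₁ (a_hat ω)) * g ω ∂M := by
          refine lintegral_mono fun ω => mul_le_mul_left ?_ _
          exact iInf_le (fun a => L₀ a + L₁ a) (a_hat ω)
      _ = ∫⁻ ω, L₀ (a_hat ω) * g ω + L₁ (a_hat ω) * g ω ∂M := by
          simp only [add_mul]
      _ = (∫⁻ ω, L₀ (a_hat ω) * g ω ∂M) + ∫⁻ ω, L₁ (a_hat ω) * g ω ∂M :=
          lintegral_add_left ((hL₀.comp ha).mul hg) _
      _ ≤ X + Y := by
          rw [hX, hY]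
          gcongr with ω ω
          · exact min_le_left _ _
          · exact min_le_right _ _
  -- conclude
  have h2 : ENNReal.ofReal ((1 - tvDist P₀ P₁) / 2) * I
      = ENNReal.ofReal (1 - tvDist P₀ P₁) * I / 2 := by
    rw [ENNReal.ofReal_div_of_pos (by norm_num), ENNReal.ofReal_ofNat,
      div_eq_mul_inv, div_eq_mul_inv]
    ring
  rw [h2]
  refine ENNReal.div_le_of_le_mul ?_
  calc ENNReal.ofReal (1 - tvDist P₀ P₁) * I = I * ENNReal.ofReal (1 - tvDist P₀ P₁) :=
        mul_comm _ _
    _ ≤ X + Y := hchain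
    _ ≤ max X Y + max X Y := add_le_add (le_max_left _ _) (le_max_right _ _)
    _ = max X Y * 2 := by ring
end

section
/- Let z ≥ 0 be a random variable with mean m > 0 and E[z²]/m² ≤ κ, and let z̄_T be the average of T i.i.d. copies. Define F(ν) = m e^{−ν} + ν, ν* = log m, ν_T = log z̄_T, Q_T = z̄_T/m, and U_T = Q_T − 1. Then E[(F(ν_T) − F(ν*))·1{U_T ≥ −1/2}] ≤ 2·Var(z)/(m² T) = 2(κ−1)/T. -/
open MeasureTheory ProbabilityTheory

theorem truncated_gap_expectation_bound
    {Ω : Type*} [MeasurableSpace Ω] (P : Measure Ω) [IsProbabilityMeasure P]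
    (z : ℕ → Ω → ℝ)
    (hmeas : ∀ i, Measurable (z i))
    (hindep : iIndepFun z P)
    (hident : ∀ i, Measure.map (z i) P = Measure.map (z 0) P)
    (hnonneg : ∀ i, 0 ≤ᵐ[P] z i)
    (hint2 : Integrable (fun ω => (z 0 ω) ^ 2) P)
    (m : ℝ) (hm : m = ∫ ω, z 0 ω ∂P) (hm_pos : 0 < m)
    (κ : ℝ) (hκ : (∫ ω, (z 0 ω) ^ 2 ∂P) / m ^ 2 ≤ κ)
    (T : ℕ) (hT : 0 < T)
    (F : ℝ → ℝ) (hF : ∀ ν, F ν = m * Real.exp (-ν) + ν)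
    (νstar : ℝ) (hstar : νstar = Real.log m)
    (zbar : Ω → ℝ) (hzbar : ∀ ω, zbar ω = (1 / (T : ℝ)) * ∑ i ∈ Finset.range T, z i ω)
    (νT : Ω → ℝ) (hνT : ∀ ω, νT ω = Real.log (zbar ω))
    (U : Ω → ℝ) (hU : ∀ ω, U ω = zbar ω / m - 1) :
    (∫ ω, (F (νT ω) - F νstar) *
        Set.indicator {ω | -(1 / 2 : ℝ) ≤ U ω} (fun _ => (1 : ℝ)) ω ∂P) ≤
      2 * variance (z 0) P / (m ^ 2 * T) ∧
    2 * variance (z 0) P / (m ^ 2 * T) ≤ 2 * (κ - 1) / T := by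
  have hTpos : (0 : ℝ) < (T : ℝ) := by exact_mod_cast hT
  have hm_ne : m ≠ 0 := ne_of_gt hm_pos
  -- z 0 is in L²
  have hmz0 : MemLp (z 0) 2 P :=
    (memLp_two_iff_integrable_sq (hmeas 0).aestronglyMeasurable).mpr hint2
  -- each z i is in L²
  have hmz : ∀ i, MemLp (z i) 2 P := by
    intro i
    have h0 : MemLp id 2 (Measure.map (z 0) P) :=
      (memLp_map_measure_iff aestronglyMeasurable_id (hmeas 0).aemeasurable).mpr hmz0
    have h1 : MemLp id 2 (Measure.map (z i) P) := by rw [hident i]; exact h0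
    exact (memLp_map_measure_iff aestronglyMeasurable_id (hmeas i).aemeasurable).mp h1
  -- identical distribution: equal integrals of measurable functions
  have hint_eq : ∀ (i : ℕ) (g : ℝ → ℝ), Measurable g →
      ∫ ω, g (z i ω) ∂P = ∫ ω, g (z 0 ω) ∂P := by
    intro i g hg
    rw [← integral_map (hmeas i).aemeasurable hg.aestronglyMeasurable, hident i,
      integral_map (hmeas 0).aemeasurable hg.aestronglyMeasurable]
  have hmean : ∀ i, ∫ ω, z i ω ∂P = m := by
    intro i
    have h := hint_eq i id measurable_id
    simp only [id] at h
    rw [h]; exact hm.symm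
  -- variance of each z i equals variance of z 0
  have hvar_eq : ∀ i, variance (z i) P = variance (z 0) P := by
    intro i
    rw [variance_eq_sub (hmz i), variance_eq_sub hmz0]
    have h2 : ∫ ω, (z i ω) ^ 2 ∂P = ∫ ω, (z 0 ω) ^ 2 ∂P :=
      hint_eq i (fun x => x ^ 2) (measurable_id.pow_const 2)
    simp only [Pi.pow_apply]
    rw [h2, hmean i, hmean 0]
  -- zbar is in L²
  have hS : MemLp (∑ i ∈ Finset.range T, z i) 2 P :=
    memLp_finset_sum' _ (fun i _ => hmz i)
  have hzbar_eq : zbar = (1 / (T : ℝ)) • (∑ i ∈ Finset.range T, z i) := by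
    funext ω
    simp [hzbar ω, Finset.sum_apply]
  have hmzbar : MemLp zbar 2 P := by rw [hzbar_eq]; exact hS.const_smul _
  -- mean of zbar is m
  have hmean_zbar : ∫ ω, zbar ω ∂P = m := by
    have hsum : ∫ ω, (∑ i ∈ Finset.range T, z i ω) ∂P
        = ∑ i ∈ Finset.range T, ∫ ω, z i ω ∂P :=
      integral_finset_sum _ (fun i _ => (hmz i).integrable one_le_two)
    simp only [hzbar, integral_const_mul]
    rw [hsum]
    simp only [hmean]
    rw [Finset.sum_const, Finset.card_range, nsmul_eq_mul]
    field_simp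
  -- variance of zbar
  have hvar_zbar : variance zbar P = variance (z 0) P / (T : ℝ) := by
    rw [hzbar_eq, variance_smul]
    rw [IndepFun.variance_sum (fun i _ => hmz i)
      (fun i _ j _ hij => hindep.indepFun hij)]
    simp only [hvar_eq]
    rw [Finset.sum_const, Finset.card_range, nsmul_eq_mul]
    field_simp
  -- U squared is integrable
  have hU2_int : Integrable (fun ω => U ω ^ 2) P := by
    have hmU : MemLp U 2 P := by
      have hUeq : U = (1 / m) • (zbar - fun _ => m) := by
        funext ω
        simp only [Pi.smul_apply, Pi.sub_apply, smul_eq_mul, hU ω]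
        field_simp
      rw [hUeq]
      exact ((hmzbar.sub (memLp_const m)).const_smul _)
    exact (memLp_two_iff_integrable_sq hmU.aestronglyMeasurable).mp hmU
  -- E[U²] = Var(zbar)/m²
  have hEU2 : ∫ ω, U ω ^ 2 ∂P = variance zbar P / m ^ 2 := by
    have hveq : variance zbar P = ∫ ω, (zbar ω - m) ^ 2 ∂P := by
      have h := variance_eq_integral hmzbar.aestronglyMeasurable.aemeasurable
      rw [hmean_zbar] at h
      rw [h]
    rw [hveq, ← integral_div]
    congr 1
    funext ω
    rw [hU ω]
    field_simp
  -- pointwise bounds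
  have hpt : ∀ ω, (F (νT ω) - F νstar) *
      Set.indicator {ω | -(1 / 2 : ℝ) ≤ U ω} (fun _ => (1 : ℝ)) ω ≤ 2 * U ω ^ 2 ∧
      0 ≤ (F (νT ω) - F νstar) *
      Set.indicator {ω | -(1 / 2 : ℝ) ≤ U ω} (fun _ => (1 : ℝ)) ω := by
    intro ω
    by_cases hmem : ω ∈ {ω | -(1 / 2 : ℝ) ≤ U ω}
    · rw [Set.indicator_of_mem hmem]
      set x : ℝ := zbar ω / m with hx
      have hUx : U ω = x - 1 := hU ω
      have hx_half : (1 / 2 : ℝ) ≤ x := by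
        have h := hmem
        simp only [Set.mem_setOf_eq, hUx] at h
        linarith
      have hx_pos : 0 < x := by linarith
      have hzb_pos : 0 < zbar ω := by
        have hzx : zbar ω = m * x := by rw [hx]; field_simp
        rw [hzx]; positivity
      have hdiff : F (νT ω) - F νstar = 1 / x + Real.log x - 1 := by
        rw [hF, hF, hνT ω, hstar, Real.exp_neg, Real.exp_neg, Real.exp_log hzb_pos,
          Real.exp_log hm_pos, hx, Real.log_div (ne_of_gt hzb_pos) hm_ne, one_div_div]
        field_simp
        ring
      have hlog_le : Real.log x ≤ x - 1 := Real.log_le_sub_one_of_pos hx_pos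
      have hlog_ge : 1 - x⁻¹ ≤ Real.log x := Real.one_sub_inv_le_log_of_pos hx_pos
      have hinv : 1 / x ≤ 2 := by rw [div_le_iff₀ hx_pos]; linarith
      have hkey : 1 / x + x - 2 = (x - 1) ^ 2 * (1 / x) := by field_simp; ring
      have h2 : (x - 1) ^ 2 * (1 / x) ≤ (x - 1) ^ 2 * 2 :=
        mul_le_mul_of_nonneg_left hinv (sq_nonneg _)
      rw [mul_one, hdiff, hUx]
      constructor
      · linarith
      · have hone : (1 : ℝ) / x = x⁻¹ := one_div x
        linarith
    · rw [Set.indicator_of_notMem hmem, mul_zero]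
      exact ⟨by positivity, le_refl 0⟩
  constructor
  · calc (∫ ω, (F (νT ω) - F νstar) *
        Set.indicator {ω | -(1 / 2 : ℝ) ≤ U ω} (fun _ => (1 : ℝ)) ω ∂P)
        ≤ ∫ ω, 2 * U ω ^ 2 ∂P :=
          integral_mono_of_nonneg (ae_of_all _ fun ω => (hpt ω).2) (hU2_int.const_mul 2)
            (ae_of_all _ fun ω => (hpt ω).1)
      _ = 2 * variance (z 0) P / (m ^ 2 * T) := by
          rw [integral_const_mul, hEU2, hvar_zbar, div_div, mul_comm (T : ℝ) (m ^ 2)]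
          exact (mul_div_assoc 2 _ _).symm
  · have hvd : variance (z 0) P = (∫ ω, (z 0 ω) ^ 2 ∂P) - m ^ 2 := by
      rw [variance_eq_sub hmz0]
      simp only [Pi.pow_apply]
      rw [← hm]
    have hz2 : ∫ ω, (z 0 ω) ^ 2 ∂P ≤ κ * m ^ 2 := by
      rwa [div_le_iff₀ (by positivity)] at hκ
    have hvb : variance (z 0) P ≤ (κ - 1) * m ^ 2 := by rw [hvd]; nlinarith
    rw [div_le_div_iff₀ (by positivity) hTpos]
    have h3 : variance (z 0) P * (T : ℝ) ≤ (κ - 1) * m ^ 2 * (T : ℝ) :=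
      mul_le_mul_of_nonneg_right hvb (le_of_lt hTpos)
    nlinarith [sq_nonneg m]
end
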